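/- Let u = p/q be a rational solution of the generic Painlevé-III equation with parameters (Θ₀, Θ∞). Then p and q have equal degree, the limit a of u(x) as |x| → ∞ (the ratio of the leading coefficients of p and q) satisfies a⁴ = 1, and moreover x·(u(x) − a) → a²(Θ∞ − 1)/4 − Θ₀/4 as |x| → ∞. -/

import Mathlib

open Complex Polynomial Filter

/-- The generic Painlevé-III equation with parameters `(Θ0, Θinf)` holds for the
function `u` at the point `x`. -/
def PIIIat (Θ0 Θinf : ℂ) (u : ℂ → ℂ) (x : ℂ) : Prop :=
  deriv (deriv u) x =
    (deriv u x) ^ 2 / u x - deriv u x / x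
      + (4 * Θ0 * (u x) ^ 2 + 4 * (1 - Θinf)) / x
      + 4 * (u x) ^ 3 - 4 / u x

/-- The rational function `p/q` is a rational solution of the generic Painlevé-III
equation with parameters `(Θ0, Θinf)`. -/
def IsRatSolutionPIII (Θ0 Θinf : ℂ) (p q : Polynomial ℂ) : Prop :=
  p ≠ 0 ∧ q ≠ 0 ∧ ∀ x : ℂ, x ≠ 0 → p.eval x ≠ 0 → q.eval x ≠ 0 →
    PIIIat Θ0 Θinf (fun y => p.eval y / q.eval y) x

lemma eventually_ne_cobounded (z : ℂ) : ∀ᶠ x : ℂ in Bornology.cobounded ℂ, x ≠ z :=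
  (Bornology.le_cofinite ℂ) (by simp [Set.Finite.compl_mem_cofinite, Set.finite_singleton] :
    {x : ℂ | x ≠ z} ∈ cofinite)

lemma tendstoA (A : Polynomial ℂ) (c : ℕ) (hA : A.natDegree ≤ c) :
    Tendsto (fun x : ℂ => A.eval x / x ^ c) (Bornology.cobounded ℂ) (nhds (A.coeff c)) := by
  set B : Polynomial ℂ := ∑ j ∈ Finset.range (c + 1), C (A.coeff (c - j)) * X ^ j with hB
  have hBe : ∀ y : ℂ, B.eval y = ∑ j ∈ Finset.range (c + 1), A.coeff (c - j) * y ^ j := by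
    intro y; simp [hB, eval_finset_sum]
  have key : ∀ x : ℂ, x ≠ 0 → A.eval x / x ^ c = B.eval x⁻¹ := by
    intro x hx
    rw [hBe, Polynomial.eval_eq_sum_range' (lt_of_le_of_lt hA (Nat.lt_succ_self c))]
    rw [Finset.sum_div, ← Finset.sum_range_reflect]
    refine Finset.sum_congr rfl ?_
    intro j hj
    rw [Finset.mem_range] at hj
    have hjc : j ≤ c := Nat.lt_succ_iff.mp hj
    have : c + 1 - 1 - j = c - j := by omega
    rw [this, pow_sub₀ x hx hjc]
    field_simp
    ring_nf
    rw [mul_assoc, ← mul_pow, mul_inv_cancel₀ hx, one_pow, mul_one]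
  have hev : (fun x : ℂ => A.eval x / x ^ c) =ᶠ[Bornology.cobounded ℂ] fun x => B.eval x⁻¹ := by
    filter_upwards [eventually_ne_cobounded 0] with x hx using key x hx
  have h0 : Tendsto (fun x : ℂ => x⁻¹) (Bornology.cobounded ℂ) (nhds 0) := tendsto_inv₀_cobounded
  have h1 := (B.continuous_aeval.tendsto 0).comp h0
  have hB0 : B.eval 0 = A.coeff c := by
    rw [hBe, Finset.sum_eq_single 0]
    · simp
    · intro j _ hj
      simp [zero_pow hj]
    · simp
  refine Tendsto.congr' hev.symm ?_
  simpa [Function.comp_def, hB0] using h1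

noncomputable def wP (p q : Polynomial ℂ) : Polynomial ℂ :=
  derivative p * q - p * derivative q

noncomputable def vP (p q : Polynomial ℂ) : Polynomial ℂ :=
  derivative (wP p q) * q - 2 * wP p q * derivative q

noncomputable def EP (Θ0 Θinf : ℂ) (p q : Polynomial ℂ) : Polynomial ℂ :=
  X * (p * vP p q) - X * (wP p q) ^ 2 + p * (q * wP p q)
    - C (4 * Θ0) * (p ^ 3 * q) - C (4 * (1 - Θinf)) * (p * q ^ 3)
    - C 4 * (X * p ^ 4) + C 4 * (X * q ^ 4)

lemma deriv_ratio (p q : Polynomial ℂ) (x : ℂ) (hqx : q.eval x ≠ 0) :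
    deriv (fun y => p.eval y / q.eval y) x = (wP p q).eval x / (q.eval x) ^ 2 := by
  have h := ((p.hasDerivAt x).div (q.hasDerivAt x) hqx).deriv
  rw [show (fun y => p.eval y / q.eval y) = (fun x => eval x p) / (fun x => eval x q) from rfl, h]
  simp [wP]

lemma deriv2_ratio (p q : Polynomial ℂ) (x : ℂ) (hqx : q.eval x ≠ 0) :
    deriv (deriv (fun y => p.eval y / q.eval y)) x = (vP p q).eval x / (q.eval x) ^ 3 := by
  have hopen : IsOpen {y : ℂ | q.eval y ≠ 0} :=
    isOpen_compl_singleton.preimage (q.continuous_aeval)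
  have heq : deriv (fun y => p.eval y / q.eval y) =ᶠ[nhds x]
      fun y => (wP p q).eval y / (q ^ 2).eval y := by
    filter_upwards [hopen.mem_nhds hqx] with y hy
    rw [deriv_ratio p q y hy, eval_pow]
  rw [heq.deriv_eq, deriv_ratio (wP p q) (q ^ 2) x (by simp [hqx])]
  have hd : derivative (q ^ 2) = C 2 * q * derivative q := derivative_sq q
  simp only [wP, vP, eval_sub, eval_mul, eval_pow, hd, eval_C, eval_ofNat]
  have hW := (wP p q).eval x
  field_simp

lemma ode_poly_identity (Θ0 Θinf : ℂ) (Vv W P Q x : ℂ) (hx : x ≠ 0) (hpx : P ≠ 0)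
    (hqx : Q ≠ 0)
    (h : Vv / Q ^ 3 =
      (W / Q ^ 2) ^ 2 / (P / Q) - W / Q ^ 2 / x +
        (4 * Θ0 * (P / Q) ^ 2 + 4 * (1 - Θinf)) / x + 4 * (P / Q) ^ 3 - 4 / (P / Q)) :
    x * (P * Vv) - x * W ^ 2 + P * (Q * W) - 4 * Θ0 * (P ^ 3 * Q)
      - 4 * (1 - Θinf) * (P * Q ^ 3) - 4 * (x * P ^ 4) + 4 * (x * Q ^ 4) = 0 := by
  have h1 := congrArg (· * (x * P * Q ^ 3)) h
  simp only [sub_mul, add_mul] at h1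
  have tL : Vv / Q ^ 3 * (x * P * Q ^ 3) = x * P * Vv := by field_simp
  have tA : (W / Q ^ 2) ^ 2 / (P / Q) * (x * P * Q ^ 3) = x * W ^ 2 := by
    rw [div_div_eq_mul_div, div_pow]; field_simp
  have tB : W / Q ^ 2 / x * (x * P * Q ^ 3) = P * Q * W := by field_simp
  have tC : (4 * Θ0 * (P / Q) ^ 2 + 4 * (1 - Θinf)) / x * (x * P * Q ^ 3) =
      4 * Θ0 * P ^ 3 * Q + 4 * (1 - Θinf) * P * Q ^ 3 := by
    rw [div_pow]; field_simp
  have tD : 4 * (P / Q) ^ 3 * (x * P * Q ^ 3) = 4 * x * P ^ 4 := by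
    rw [div_pow]; field_simp
  have tE : 4 / (P / Q) * (x * P * Q ^ 3) = 4 * x * Q ^ 4 := by
    rw [div_div_eq_mul_div]; field_simp
  rw [tL, tA, tB, tC, tD, tE] at h1
  linear_combination h1

lemma EP_eval_zero (Θ0 Θinf : ℂ) (p q : Polynomial ℂ)
    (hODE : ∀ x : ℂ, x ≠ 0 → p.eval x ≠ 0 → q.eval x ≠ 0 →
      PIIIat Θ0 Θinf (fun y => p.eval y / q.eval y) x)
    (x : ℂ) (hx : x ≠ 0) (hpx : p.eval x ≠ 0) (hqx : q.eval x ≠ 0) :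
    (EP Θ0 Θinf p q).eval x = 0 := by
  have h := hODE x hx hpx hqx
  unfold PIIIat at h
  rw [deriv2_ratio p q x hqx, deriv_ratio p q x hqx] at h
  beta_reduce at h
  have habs := ode_poly_identity Θ0 Θinf ((vP p q).eval x) ((wP p q).eval x)
    (p.eval x) (q.eval x) x hx hpx hqx h
  simp only [EP, eval_add, eval_sub, eval_mul, eval_pow, eval_C, eval_X]
  linear_combination habs

lemma EP_zero (Θ0 Θinf : ℂ) (p q : Polynomial ℂ) (hp : p ≠ 0) (hq : q ≠ 0)
    (hODE : ∀ x : ℂ, x ≠ 0 → p.eval x ≠ 0 → q.eval x ≠ 0 →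
      PIIIat Θ0 Θinf (fun y => p.eval y / q.eval y) x) :
    EP Θ0 Θinf p q = 0 := by
  apply eq_zero_of_infinite_isRoot
  have hfin : (({(0:ℂ)} ∪ {x | p.IsRoot x}) ∪ {x | q.IsRoot x}).Finite :=
    ((Set.finite_singleton 0).union (finite_setOf_isRoot hp)).union (finite_setOf_isRoot hq)
  refine Set.Infinite.mono ?_ hfin.infinite_compl
  intro x hx
  simp only [Set.mem_compl_iff, Set.mem_union, Set.mem_singleton_iff, Set.mem_setOf_eq,
    not_or] at hx
  exact EP_eval_zero Θ0 Θinf p q hODE x hx.1.1 hx.1.2 hx.2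

lemma natDegree_X_mul_le (f : Polynomial ℂ) : (X * f).natDegree ≤ 1 + f.natDegree :=
  natDegree_mul_le.trans (by simp [natDegree_X])

lemma core_bounds (p q : Polynomial ℂ) (hm : 1 ≤ p.natDegree) (hn : 1 ≤ q.natDegree) :
    (wP p q).natDegree ≤ p.natDegree + q.natDegree - 1 ∧
    (vP p q).natDegree ≤ p.natDegree + 2 * q.natDegree - 2 := by
  set m := p.natDegree
  set n := q.natDegree
  have hdp : (derivative p).natDegree ≤ m - 1 := natDegree_derivative_le p
  have hdq : (derivative q).natDegree ≤ n - 1 := natDegree_derivative_le q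
  have h1 : (derivative p * q).natDegree ≤ m + n - 1 :=
    natDegree_mul_le.trans (by omega)
  have h2 : (p * derivative q).natDegree ≤ m + n - 1 :=
    natDegree_mul_le.trans (by omega)
  have hw : (wP p q).natDegree ≤ m + n - 1 :=
    (natDegree_sub_le _ _).trans (by omega)
  refine ⟨hw, ?_⟩
  have hdw : (derivative (wP p q)).natDegree ≤ m + n - 2 :=
    (natDegree_derivative_le _).trans (by omega)
  have h3 : (derivative (wP p q) * q).natDegree ≤ m + 2 * n - 2 :=
    natDegree_mul_le.trans (by omega)
  have h4 : (2 * wP p q * derivative q).natDegree ≤ m + 2 * n - 2 := by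
    refine natDegree_mul_le.trans ?_
    have : ((2 : Polynomial ℂ) * wP p q).natDegree ≤ m + n - 1 :=
      natDegree_mul_le.trans (by simpa using hw)
    omega
  exact (natDegree_sub_le _ _).trans (by omega)

lemma degree_eq_core (Θ0 Θinf : ℂ) (p q : Polynomial ℂ) (hp : p ≠ 0) (hq : q ≠ 0)
    (hm : 1 ≤ p.natDegree) (hn : 1 ≤ q.natDegree) (hE : EP Θ0 Θinf p q = 0) :
    p.natDegree = q.natDegree := by
  by_contra hne
  obtain ⟨hw, hv⟩ := core_bounds p q hm hn
  set m := p.natDegree with hmdef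
  set n := q.natDegree with hndef
  rcases lt_or_gt_of_ne hne with hlt | hgt
  · have h0 := congrArg (fun f => Polynomial.coeff f (4*n+1)) hE
    simp only [EP, coeff_add, coeff_sub, coeff_C_mul, coeff_zero] at h0
    have c1 : (X * (p * vP p q)).coeff (4*n+1) = 0 := by
      have e1 := natDegree_X_mul_le (p * vP p q)
      have e2 := natDegree_mul_le (p := p) (q := vP p q)
      exact coeff_eq_zero_of_natDegree_lt (by omega)
    have c2 : (X * (wP p q) ^ 2).coeff (4*n+1) = 0 := by
      have e1 := natDegree_X_mul_le ((wP p q) ^ 2)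
      have e2 := natDegree_pow_le (p := wP p q) (n := 2)
      exact coeff_eq_zero_of_natDegree_lt (by omega)
    have c3 : (p * (q * wP p q)).coeff (4*n+1) = 0 := by
      have e1 := natDegree_mul_le (p := p) (q := q * wP p q)
      have e2 := natDegree_mul_le (p := q) (q := wP p q)
      exact coeff_eq_zero_of_natDegree_lt (by omega)
    have c4 : (p ^ 3 * q).coeff (4*n+1) = 0 := by
      have e1 := natDegree_mul_le (p := p ^ 3) (q := q)
      have e2 := natDegree_pow_le (p := p) (n := 3)
      exact coeff_eq_zero_of_natDegree_lt (by omega)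
    have c5 : (p * q ^ 3).coeff (4*n+1) = 0 := by
      have e1 := natDegree_mul_le (p := p) (q := q ^ 3)
      have e2 := natDegree_pow_le (p := q) (n := 3)
      exact coeff_eq_zero_of_natDegree_lt (by omega)
    have c6 : (X * p ^ 4).coeff (4*n+1) = 0 := by
      rw [coeff_X_mul]
      have e2 := natDegree_pow_le (p := p) (n := 4)
      exact coeff_eq_zero_of_natDegree_lt (by omega)
    have c7 : (X * q ^ 4).coeff (4*n+1) = q.leadingCoeff ^ 4 := by
      rw [coeff_X_mul]
      exact coeff_pow_of_natDegree_le le_rfl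
    rw [c1, c2, c3, c4, c5, c6, c7] at h0
    have hlc : q.leadingCoeff ^ 4 = 0 := by linear_combination h0 / 4
    exact hq (leadingCoeff_eq_zero.mp
      (by simpa using pow_eq_zero_iff (n := 4) (by norm_num) |>.mp hlc))
  · have h0 := congrArg (fun f => Polynomial.coeff f (4*m+1)) hE
    simp only [EP, coeff_add, coeff_sub, coeff_C_mul, coeff_zero] at h0
    have c1 : (X * (p * vP p q)).coeff (4*m+1) = 0 := by
      have e1 := natDegree_X_mul_le (p * vP p q)
      have e2 := natDegree_mul_le (p := p) (q := vP p q)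
      exact coeff_eq_zero_of_natDegree_lt (by omega)
    have c2 : (X * (wP p q) ^ 2).coeff (4*m+1) = 0 := by
      have e1 := natDegree_X_mul_le ((wP p q) ^ 2)
      have e2 := natDegree_pow_le (p := wP p q) (n := 2)
      exact coeff_eq_zero_of_natDegree_lt (by omega)
    have c3 : (p * (q * wP p q)).coeff (4*m+1) = 0 := by
      have e1 := natDegree_mul_le (p := p) (q := q * wP p q)
      have e2 := natDegree_mul_le (p := q) (q := wP p q)
      exact coeff_eq_zero_of_natDegree_lt (by omega)
    have c4 : (p ^ 3 * q).coeff (4*m+1) = 0 := by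
      have e1 := natDegree_mul_le (p := p ^ 3) (q := q)
      have e2 := natDegree_pow_le (p := p) (n := 3)
      exact coeff_eq_zero_of_natDegree_lt (by omega)
    have c5 : (p * q ^ 3).coeff (4*m+1) = 0 := by
      have e1 := natDegree_mul_le (p := p) (q := q ^ 3)
      have e2 := natDegree_pow_le (p := q) (n := 3)
      exact coeff_eq_zero_of_natDegree_lt (by omega)
    have c6 : (X * q ^ 4).coeff (4*m+1) = 0 := by
      rw [coeff_X_mul]
      have e2 := natDegree_pow_le (p := q) (n := 4)
      exact coeff_eq_zero_of_natDegree_lt (by omega)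
    have c7 : (X * p ^ 4).coeff (4*m+1) = p.leadingCoeff ^ 4 := by
      rw [coeff_X_mul]
      exact coeff_pow_of_natDegree_le le_rfl
    rw [c1, c2, c3, c4, c5, c6, c7] at h0
    have hlc : p.leadingCoeff ^ 4 = 0 := by linear_combination -h0 / 4
    exact hp (leadingCoeff_eq_zero.mp
      (by simpa using pow_eq_zero_iff (n := 4) (by norm_num) |>.mp hlc))


lemma coeff_mul_sub_one (f g : Polynomial ℂ) (df dg : ℕ) (hf : f.natDegree ≤ df + 1)
    (hg : g.natDegree ≤ dg + 1) :
    (f * g).coeff (df + dg + 1) = f.coeff (df + 1) * g.coeff dg + f.coeff df * g.coeff (dg + 1) := by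
  rw [coeff_mul]
  have hne : ((df + 1, dg) : ℕ × ℕ) ≠ (df, dg + 1) := by simp
  have hsub : ({(df + 1, dg), (df, dg + 1)} : Finset (ℕ × ℕ)) ⊆ Finset.HasAntidiagonal.antidiagonal (df + dg + 1) := by
    intro x hx
    simp only [Finset.mem_insert, Finset.mem_singleton] at hx
    rcases hx with rfl | rfl <;> simp [Finset.mem_antidiagonal] <;> omega
  rw [← Finset.sum_subset hsub]
  · rw [Finset.sum_insert (by simp), Finset.sum_singleton]
  · rintro ⟨i, j⟩ hx hxs
    rw [Finset.HasAntidiagonal.mem_antidiagonal] at hx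
    simp only [Finset.mem_insert, Finset.mem_singleton, Prod.mk.injEq, not_or, not_and] at hxs
    rcases le_or_gt i (df + 1) with hle | hlt
    · have hj : dg + 1 < j := by omega
      rw [coeff_eq_zero_of_natDegree_lt (lt_of_le_of_lt hg hj), mul_zero]
    · rw [coeff_eq_zero_of_natDegree_lt (lt_of_le_of_lt hf hlt), zero_mul]

lemma coeff_pow4_sub_one (f : Polynomial ℂ) (k : ℕ) (hf : f.natDegree ≤ k+1) :
    (f^4).coeff (4*k+3) = 4 * f.coeff (k+1) ^ 3 * f.coeff k := by
  have h2top : (f^2).coeff (2*k+2) = f.coeff (k+1) ^ 2 := by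
    rw [pow_two, show 2*k+2 = (k+1)+(k+1) from by omega, coeff_mul_add_eq_of_natDegree_le hf hf, sq]
  have h2sub : (f^2).coeff (2*k+1) = 2 * (f.coeff (k+1) * f.coeff k) := by
    rw [pow_two, show 2*k+1 = k+k+1 from by omega, coeff_mul_sub_one f f k k hf hf]; ring
  have h2deg : (f^2).natDegree ≤ 2*k+2 := natDegree_pow_le.trans (by omega)
  calc (f^4).coeff (4*k+3) = (f^2*f^2).coeff ((2*k+1)+(2*k+1)+1) := by
        rw [show f^4 = f^2*f^2 from by ring, show 4*k+3 = (2*k+1)+(2*k+1)+1 from by omega]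
    _ = (f^2).coeff ((2*k+1)+1) * (f^2).coeff (2*k+1)
          + (f^2).coeff (2*k+1) * (f^2).coeff ((2*k+1)+1) :=
        coeff_mul_sub_one _ _ _ _ (by omega) (by omega)
    _ = 4 * f.coeff (k+1) ^ 3 * f.coeff k := by
        rw [show (2*k+1)+1 = 2*k+2 from by omega, h2top, h2sub]; ring

lemma subleading_eq (Θ0 Θinf : ℂ) (p q : Polynomial ℂ) (k : ℕ)
    (hm : p.natDegree = k+1) (hn : q.natDegree = k+1) (hE : EP Θ0 Θinf p q = 0) :
    0 = -(4*Θ0) * (p.leadingCoeff ^ 3 * q.leadingCoeff)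
      - (4*(1-Θinf)) * (p.leadingCoeff * q.leadingCoeff ^ 3)
      - 4 * (4 * p.leadingCoeff ^ 3 * p.coeff k) + 4 * (4 * q.leadingCoeff ^ 3 * q.coeff k) := by
  obtain ⟨hw, hv⟩ := core_bounds p q (by omega) (by omega)
  rw [hm, hn] at hw hv
  have hpd : p.natDegree ≤ k+1 := hm.le
  have hqd : q.natDegree ≤ k+1 := hn.le
  have hpc : p.coeff (k+1) = p.leadingCoeff := hm ▸ coeff_natDegree
  have hqc : q.coeff (k+1) = q.leadingCoeff := hn ▸ coeff_natDegree
  have h0 := congrArg (fun f => Polynomial.coeff f (4*k+4)) hE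
  simp only [EP, coeff_add, coeff_sub, coeff_C_mul, coeff_zero] at h0
  have c1 : (X * (p * vP p q)).coeff (4*k+4) = 0 := by
    have e1 := natDegree_X_mul_le (p * vP p q)
    have e2 := natDegree_mul_le (p := p) (q := vP p q)
    exact coeff_eq_zero_of_natDegree_lt (by omega)
  have c2 : (X * (wP p q) ^ 2).coeff (4*k+4) = 0 := by
    have e1 := natDegree_X_mul_le ((wP p q) ^ 2)
    have e2 := natDegree_pow_le (p := wP p q) (n := 2)
    exact coeff_eq_zero_of_natDegree_lt (by omega)
  have c3 : (p * (q * wP p q)).coeff (4*k+4) = 0 := by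
    have e1 := natDegree_mul_le (p := p) (q := q * wP p q)
    have e2 := natDegree_mul_le (p := q) (q := wP p q)
    exact coeff_eq_zero_of_natDegree_lt (by omega)
  have c4 : (p ^ 3 * q).coeff (4*k+4) = p.leadingCoeff ^ 3 * q.leadingCoeff := by
    rw [show 4*k+4 = (3*k+3) + (k+1) from by omega,
      coeff_mul_add_eq_of_natDegree_le (natDegree_pow_le.trans (by omega)) hqd,
      show 3*k+3 = 3*(k+1) from by omega, coeff_pow_of_natDegree_le hpd, hpc, hqc]
  have c5 : (p * q ^ 3).coeff (4*k+4) = p.leadingCoeff * q.leadingCoeff ^ 3 := by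
    rw [show 4*k+4 = (k+1) + (3*k+3) from by omega,
      coeff_mul_add_eq_of_natDegree_le hpd (natDegree_pow_le.trans (by omega)),
      show 3*k+3 = 3*(k+1) from by omega, coeff_pow_of_natDegree_le hqd, hpc, hqc]
  have c6 : (X * p ^ 4).coeff (4*k+4) = 4 * p.leadingCoeff ^ 3 * p.coeff k := by
    rw [show 4*k+4 = (4*k+3)+1 from by omega, coeff_X_mul, coeff_pow4_sub_one p k hpd, hpc]
  have c7 : (X * q ^ 4).coeff (4*k+4) = 4 * q.leadingCoeff ^ 3 * q.coeff k := by
    rw [show 4*k+4 = (4*k+3)+1 from by omega, coeff_X_mul, coeff_pow4_sub_one q k hqd, hqc]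
  rw [c1, c2, c3, c4, c5, c6, c7] at h0
  linear_combination -h0

lemma leading_eq (Θ0 Θinf : ℂ) (p q : Polynomial ℂ) (k : ℕ)
    (hm : p.natDegree = k+1) (hn : q.natDegree = k+1) (hE : EP Θ0 Θinf p q = 0) :
    p.leadingCoeff ^ 4 = q.leadingCoeff ^ 4 := by
  obtain ⟨hw, hv⟩ := core_bounds p q (by omega) (by omega)
  rw [hm, hn] at hw hv
  have h0 := congrArg (fun f => Polynomial.coeff f (4*(k+1)+1)) hE
  simp only [EP, coeff_add, coeff_sub, coeff_C_mul, coeff_zero] at h0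
  have c1 : (X * (p * vP p q)).coeff (4*(k+1)+1) = 0 := by
    have e1 := natDegree_X_mul_le (p * vP p q)
    have e2 := natDegree_mul_le (p := p) (q := vP p q)
    exact coeff_eq_zero_of_natDegree_lt (by omega)
  have c2 : (X * (wP p q) ^ 2).coeff (4*(k+1)+1) = 0 := by
    have e1 := natDegree_X_mul_le ((wP p q) ^ 2)
    have e2 := natDegree_pow_le (p := wP p q) (n := 2)
    exact coeff_eq_zero_of_natDegree_lt (by omega)
  have c3 : (p * (q * wP p q)).coeff (4*(k+1)+1) = 0 := by
    have e1 := natDegree_mul_le (p := p) (q := q * wP p q)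
    have e2 := natDegree_mul_le (p := q) (q := wP p q)
    exact coeff_eq_zero_of_natDegree_lt (by omega)
  have c4 : (p ^ 3 * q).coeff (4*(k+1)+1) = 0 := by
    have e1 := natDegree_mul_le (p := p ^ 3) (q := q)
    have e2 := natDegree_pow_le (p := p) (n := 3)
    exact coeff_eq_zero_of_natDegree_lt (by omega)
  have c5 : (p * q ^ 3).coeff (4*(k+1)+1) = 0 := by
    have e1 := natDegree_mul_le (p := p) (q := q ^ 3)
    have e2 := natDegree_pow_le (p := q) (n := 3)
    exact coeff_eq_zero_of_natDegree_lt (by omega)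
  have c6 : (X * p ^ 4).coeff (4*(k+1)+1) = p.leadingCoeff ^ 4 := by
    rw [coeff_X_mul, ← hm, coeff_pow_of_natDegree_le le_rfl, coeff_natDegree]
  have c7 : (X * q ^ 4).coeff (4*(k+1)+1) = q.leadingCoeff ^ 4 := by
    rw [coeff_X_mul, ← hn, coeff_pow_of_natDegree_le le_rfl, coeff_natDegree]
  rw [c1, c2, c3, c4, c5, c6, c7] at h0
  linear_combination -h0 / 4


lemma rat_tendsto (A B : Polynomial ℂ) (c : ℕ) (hA : A.natDegree ≤ c) (hB : B ≠ 0)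
    (hc : B.natDegree = c) :
    Filter.Tendsto (fun x : ℂ => A.eval x / B.eval x) (Bornology.cobounded ℂ)
      (nhds (A.coeff c / B.leadingCoeff)) := by
  have hAc := tendstoA A c hA
  have hBc := tendstoA B c hc.le
  have hlc : B.coeff c = B.leadingCoeff := by rw [← hc]; rfl
  have hne : B.leadingCoeff ≠ 0 := leadingCoeff_ne_zero.mpr hB
  have hdiv := hAc.div hBc (by rw [hlc]; exact hne)
  rw [hlc] at hdiv
  refine Tendsto.congr' ?_ hdiv
  filter_upwards [eventually_ne_cobounded 0] with x hx
  have hxc : (x : ℂ) ^ c ≠ 0 := pow_ne_zero _ hx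
  rcases eq_or_ne (B.eval x) 0 with hb | hb
  · simp [hb, hxc]
  · simp only [Pi.div_apply]
    field_simp

lemma PIIIat_congr (Θ0 Θinf : ℂ) (u w : ℂ → ℂ) (x : ℂ) (hU : u =ᶠ[nhds x] w)
    (h : PIIIat Θ0 Θinf u x) : PIIIat Θ0 Θinf w x := by
  have hd : deriv u =ᶠ[nhds x] deriv w := hU.deriv
  have h1 : deriv u x = deriv w x := hd.self_of_nhds
  have h2 : deriv (deriv u) x = deriv (deriv w) x := hd.deriv_eq
  have h0 : u x = w x := hU.self_of_nhds
  unfold PIIIat at h ⊢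
  rw [← h0, ← h1, ← h2]
  exact h

lemma core (Θ0 Θinf : ℂ) (p q : Polynomial ℂ) (hp : p ≠ 0) (hq : q ≠ 0)
    (hm1 : 1 ≤ p.natDegree) (hn1 : 1 ≤ q.natDegree)
    (hODE : ∀ x : ℂ, x ≠ 0 → p.eval x ≠ 0 → q.eval x ≠ 0 →
      PIIIat Θ0 Θinf (fun y => p.eval y / q.eval y) x) :
    p.natDegree = q.natDegree ∧
    (p.leadingCoeff / q.leadingCoeff) ^ 4 = 1 ∧
    Filter.Tendsto
      (fun x : ℂ => x * (p.eval x / q.eval x - p.leadingCoeff / q.leadingCoeff))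
      (Bornology.cobounded ℂ)
      (nhds ((p.leadingCoeff / q.leadingCoeff) ^ 2 * (Θinf - 1) / 4 - Θ0 / 4)) := by
  have hE := EP_zero Θ0 Θinf p q hp hq hODE
  have hdeg := degree_eq_core Θ0 Θinf p q hp hq hm1 hn1 hE
  obtain ⟨k, hk⟩ : ∃ k, q.natDegree = k + 1 := ⟨q.natDegree - 1, by omega⟩
  have hm : p.natDegree = k + 1 := hdeg.trans hk
  have ha0 : p.leadingCoeff ≠ 0 := leadingCoeff_ne_zero.mpr hp
  have hb0 : q.leadingCoeff ≠ 0 := leadingCoeff_ne_zero.mpr hq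
  have h4 := leading_eq Θ0 Θinf p q k hm hk hE
  have hS := subleading_eq Θ0 Θinf p q k hm hk hE
  have hpc : p.coeff (k+1) = p.leadingCoeff := hm ▸ coeff_natDegree
  have hqc : q.coeff (k+1) = q.leadingCoeff := hk ▸ coeff_natDegree
  refine ⟨hdeg, by rw [div_pow, h4, div_self (pow_ne_zero _ hb0)], ?_⟩
  set a := p.leadingCoeff / q.leadingCoeff with hadef
  set s := p - C a * q with hsdef
  have hsdeg : s.natDegree ≤ k := by
    rw [natDegree_le_iff_coeff_eq_zero]
    intro N hN
    rcases eq_or_ne N (k+1) with rfl | hNe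
    · simp only [hsdef, coeff_sub, coeff_C_mul, hpc, hqc, hadef]
      field_simp
      ring
    · have hNk : k + 1 < N := by omega
      simp only [hsdef, coeff_sub, coeff_C_mul]
      rw [coeff_eq_zero_of_natDegree_lt (by omega), coeff_eq_zero_of_natDegree_lt (by omega)]
      ring
  have hXs : (X * s).natDegree ≤ k + 1 := (natDegree_X_mul_le s).trans (by omega)
  have hXc : (X * s).coeff (k+1) = p.coeff k - a * q.coeff k := by
    rw [coeff_X_mul]
    simp [hsdef, coeff_sub, coeff_C_mul]
  have hT := rat_tendsto (X * s) q (k+1) hXs hq hk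
  have hval : (X * s).coeff (k+1) / q.leadingCoeff = a ^ 2 * (Θinf - 1) / 4 - Θ0 / 4 := by
    rw [hXc]
    set a0 := p.leadingCoeff
    set b0 := q.leadingCoeff
    set a1 := p.coeff k
    set b1 := q.coeff k
    have key : (16*a1*b0 - 16*a0*b1) * a0^3 = (4*a0^2*(Θinf-1) - 4*Θ0*b0^2) * a0^3 := by
      linear_combination b0 * hS - (16*b1 + 4*(Θinf-1)*a0) * h4
    have key2 : 16*a1*b0 - 16*a0*b1 = 4*a0^2*(Θinf-1) - 4*Θ0*b0^2 :=
      mul_right_cancel₀ (pow_ne_zero 3 ha0) key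
    rw [hadef]
    field_simp
    linear_combination key2 / 4
  rw [← hval]
  refine Tendsto.congr' ?_ hT
  have hqev : ∀ᶠ x : ℂ in Bornology.cobounded ℂ, q.eval x ≠ 0 := by
    refine (Bornology.le_cofinite ℂ) ?_
    have : {x : ℂ | q.IsRoot x}.Finite := finite_setOf_isRoot hq
    exact this.compl_mem_cofinite
  filter_upwards [hqev] with x hx
  have hnum : eval x (X * s) = x * (p.eval x - a * q.eval x) := by
    simp [hsdef]
  rw [hnum, mul_div_assoc, sub_div, mul_div_cancel_right₀ a hx]

theorem rational_solution_behavior_at_infinity (Θ0 Θinf : ℂ) (p q : Polynomial ℂ)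
    (h : IsRatSolutionPIII Θ0 Θinf p q) :
    p.natDegree = q.natDegree ∧
    (p.leadingCoeff / q.leadingCoeff) ^ 4 = 1 ∧
    Filter.Tendsto
      (fun x : ℂ => x * (p.eval x / q.eval x - p.leadingCoeff / q.leadingCoeff))
      (Bornology.cobounded ℂ)
      (nhds ((p.leadingCoeff / q.leadingCoeff) ^ 2 * (Θinf - 1) / 4 - Θ0 / 4)) := by
  obtain ⟨hp, hq, hODE⟩ := h
  have hXp : X * p ≠ 0 := mul_ne_zero X_ne_zero hp
  have hXq : X * q ≠ 0 := mul_ne_zero X_ne_zero hq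
  have hdp : (X * p).natDegree = 1 + p.natDegree := by rw [natDegree_mul X_ne_zero hp, natDegree_X]
  have hdq : (X * q).natDegree = 1 + q.natDegree := by rw [natDegree_mul X_ne_zero hq, natDegree_X]
  have hlp : (X * p).leadingCoeff = p.leadingCoeff := by rw [leadingCoeff_mul, leadingCoeff_X, one_mul]
  have hlq : (X * q).leadingCoeff = q.leadingCoeff := by rw [leadingCoeff_mul, leadingCoeff_X, one_mul]
  have hODE' : ∀ x : ℂ, x ≠ 0 → (X * p).eval x ≠ 0 → (X * q).eval x ≠ 0 →
      PIIIat Θ0 Θinf (fun y => (X * p).eval y / (X * q).eval y) x := by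
    intro x hx hpx hqx
    simp only [eval_mul, eval_X] at hpx hqx
    have hpx' : p.eval x ≠ 0 := fun h => hpx (by rw [h, mul_zero])
    have hqx' : q.eval x ≠ 0 := fun h => hqx (by rw [h, mul_zero])
    refine PIIIat_congr Θ0 Θinf _ _ x ?_ (hODE x hx hpx' hqx')
    filter_upwards [isOpen_compl_singleton.mem_nhds (by simpa using hx :
        x ∈ ({0}ᶜ : Set ℂ))] with y hy
    have hy0 : y ≠ 0 := by simpa using hy
    simp only [eval_mul, eval_X]
    rw [mul_div_mul_left _ _ hy0]
  obtain ⟨h1, h2, h3⟩ := core Θ0 Θinf (X * p) (X * q) hXp hXq (by omega) (by omega) hODE'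
  rw [hdp, hdq] at h1
  rw [hlp, hlq] at h2 h3
  refine ⟨by omega, h2, ?_⟩
  refine Tendsto.congr' ?_ h3
  filter_upwards [eventually_ne_cobounded 0] with x hx
  simp only [eval_mul, eval_X]
  rw [mul_div_mul_left _ _ hx]
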